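/- Let p be an odd prime and suppose H is a subgroup of GL₂(ℤ_p) containing a cyclic subgroup of order p+1. Then H is not contained in the Iwahori subgroup of GL₂(ℤ_p); equivalently, if H ⊆ GL₂(ℤ_p) and H ⊆ η·GL₂(ℤ_p)·η⁻¹ where η = [[0,1],[p,0]], then H contains no element of order p+1. -/

import Mathlib

/-!
Reduce `g` modulo `p`. The image lies in the Borel subgroup of `GL₂(𝔽_p)`, which has exponent
dividing `(p - 1) p`; as `gcd (p + 1, (p - 1) p)` divides `2`, `g ^ 2` reduces to `1`.
An element `x ≡ 1` with `x ^ q = 1` and `q` a unit mod `p` is trivial, because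
`(1 + x + ⋯ + x ^ (q - 1)) (x - 1) = 0` and the first factor reduces to the unit `q`.
Hence `g ^ 2 = 1`, which is incompatible with order `p + 1 > 2`.
-/

open Matrix

theorem Nat.dvd_two_of_dvd_add_one_of_dvd_sub_one_mul {d n : ℕ} (h₁ : d ∣ n + 1)
    (h₂ : d ∣ (n - 1) * n) : d ∣ 2 := by
  have hcop : d.Coprime n := Nat.Coprime.coprime_dvd_left h₁ (by simp)
  have h₃ : d ∣ n - 1 := hcop.dvd_of_dvd_mul_right h₂
  rcases Nat.eq_zero_or_pos n with rfl | hn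
  · exact Nat.dvd_trans (by simpa using h₁) (one_dvd 2)
  · simpa [show n + 1 - (n - 1) = 2 by omega] using Nat.dvd_sub h₁ h₃

theorem eq_one_of_pow_eq_one_of_map_eq_one {S T F : Type*} [Ring S] [Semiring T] [FunLike F S T]
    [RingHomClass F S T] (f : F) [IsLocalHom f] {x : S} {q : ℕ} (hq : IsUnit (q : T))
    (hxq : x ^ q = 1) (hfx : f x = 1) : x = 1 := by
  have hgeom : (∑ i ∈ Finset.range q, x ^ i) * (x - 1) = 0 := by
    rw [geom_sum_mul, hxq, sub_self]
  have hunit : IsUnit (∑ i ∈ Finset.range q, x ^ i) :=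
    (isUnit_map_iff f _).mp (by simpa [map_sum, map_pow, hfx] using hq)
  exact sub_eq_zero.mp (hunit.mul_right_eq_zero.mp hgeom)

instance RingHom.isLocalHom_mapMatrix {n R S : Type*} [Fintype n] [DecidableEq n] [CommRing R]
    [CommRing S] (f : R →+* S) [IsLocalHom f] :
    IsLocalHom (f.mapMatrix : Matrix n n R →+* Matrix n n S) where
  map_nonunit M hM := by
    rw [isUnit_iff_isUnit_det, ← RingHom.map_det, isUnit_map_iff] at hM
    exact (isUnit_iff_isUnit_det M).mpr hM

namespace Matrix

section UpperTriangular

variable {m R : Type*} [LinearOrder m] [Fintype m]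

theorem IsUpperTriangular.mul_apply_self [Semiring R] {M N : Matrix m m R}
    (hM : M.IsUpperTriangular) (hN : N.IsUpperTriangular) (i : m) :
    (M * N) i i = M i i * N i i := by
  rw [mul_apply, Finset.sum_eq_single i]
  · intro k _ hki
    rcases lt_or_gt_of_ne hki with hk | hk
    · rw [hM hk, zero_mul]
    · rw [hN hk, mul_zero]
  · simp

theorem IsUpperTriangular.pow_apply_self [DecidableEq m] [Semiring R] {M : Matrix m m R}
    (hM : M.IsUpperTriangular) (n : ℕ) (i : m) : (M ^ n) i i = M i i ^ n := by
  induction n with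
  | zero => simp
  | succ n ih => rw [pow_succ, IsUpperTriangular.mul_apply_self (hM.pow n) hM, ih, pow_succ]

theorem IsUpperTriangular.apply_self_ne_zero [DecidableEq m] [CommRing R] [IsDomain R]
    {M : Matrix m m R} (hM : M.IsUpperTriangular) (hdet : M.det ≠ 0) (i : m) : M i i ≠ 0 := by
  rw [det_of_isUpperTriangular hM] at hdet
  exact Finset.prod_ne_zero_iff.mp hdet i (Finset.mem_univ i)

end UpperTriangular

theorem isUpperTriangular_fin_two_iff {R : Type*} [Zero R] {M : Matrix (Fin 2) (Fin 2) R} :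
    M.IsUpperTriangular ↔ M 1 0 = 0 := by
  refine ⟨fun h => h (by decide), fun h i j hij => ?_⟩
  fin_cases i <;> fin_cases j <;> first | exact h | exact absurd hij (by decide)

theorem IsUpperTriangular.sq_eq_zero_of_fin_two {R : Type*} [Semiring R]
    {E : Matrix (Fin 2) (Fin 2) R} (hE : E.IsUpperTriangular) (hdiag : ∀ i, E i i = 0) :
    E ^ 2 = 0 := by
  have h10 : E 1 0 = 0 := isUpperTriangular_fin_two_iff.mp hE
  ext i j
  fin_cases i <;> fin_cases j <;> simp [sq, mul_apply, h10, hdiag]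

theorem IsUpperTriangular.pow_char_eq_one_of_fin_two {R : Type*} [Ring R] (p : ℕ) [Fact p.Prime]
    [CharP R p] {N : Matrix (Fin 2) (Fin 2) R} (hN : N.IsUpperTriangular)
    (hdiag : ∀ i, N i i = 1) : N ^ p = 1 := by
  have hsq : (N - 1) ^ 2 = 0 :=
    IsUpperTriangular.sq_eq_zero_of_fin_two (hN.sub blockTriangular_one) fun i => by
      rw [sub_apply, hdiag, one_apply_eq, sub_self]
  have hfrob := sub_pow_char_of_commute p (Commute.one_right N)
  rw [pow_eq_zero_of_le (Fact.out : p.Prime).two_le hsq, one_pow] at hfrob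
  exact sub_eq_zero.mp hfrob.symm

-- The `(|K| - 1)`-th power of an invertible upper triangular matrix is unipotent.
theorem IsUpperTriangular.pow_card_sub_one_mul_eq_one {K : Type*} [Field K] [Fintype K]
    (p : ℕ) [Fact p.Prime] [CharP K p] {M : Matrix (Fin 2) (Fin 2) K}
    (hM : M.IsUpperTriangular) (hdet : M.det ≠ 0) :
    M ^ ((Fintype.card K - 1) * p) = 1 := by
  rw [pow_mul]
  refine IsUpperTriangular.pow_char_eq_one_of_fin_two p (hM.pow _) fun i => ?_
  rw [hM.pow_apply_self, FiniteField.pow_card_sub_one_eq_one _ (hM.apply_self_ne_zero hdet i)]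

end Matrix

theorem PadicInt.toZMod_eq_zero_iff {p : ℕ} [Fact p.Prime] {x : ℤ_[p]} :
    toZMod x = 0 ↔ x ∈ Ideal.span {(p : ℤ_[p])} := by
  rw [← RingHom.mem_ker, ker_toZMod, maximalIdeal_eq_span_p]

theorem stmt13_general (p : ℕ) [Fact p.Prime]
    (H : Subgroup (GL (Fin 2) ℤ_[p]))
    (hH : ∀ g ∈ H, ((g : GL (Fin 2) ℤ_[p]) : Matrix (Fin 2) (Fin 2) ℤ_[p]) 1 0 ∈
      Ideal.span ({(p : ℤ_[p])} : Set ℤ_[p])) :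
    ∀ g ∈ H, orderOf g ≠ p + 1 := by
  intro g hg hord
  set φ := GeneralLinearGroup.map (n := Fin 2) (PadicInt.toZMod (p := p))
  have hφg : (φ g : Matrix (Fin 2) (Fin 2) (ZMod p)).IsUpperTriangular := by
    rw [isUpperTriangular_fin_two_iff, GeneralLinearGroup.map_apply,
      PadicInt.toZMod_eq_zero_iff]
    exact hH g hg
  have hborel : φ g ^ ((p - 1) * p) = 1 := Units.ext <| by
    simpa using hφg.pow_card_sub_one_mul_eq_one p (GeneralLinearGroup.det_ne_zero _)
  have hφg2 : φ (g ^ 2) = 1 := by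
    rw [map_pow, ← orderOf_dvd_iff_pow_eq_one]
    exact Nat.dvd_two_of_dvd_add_one_of_dvd_sub_one_mul (hord ▸ orderOf_map_dvd φ g)
      (orderOf_dvd_of_pow_eq_one hborel)
  have hg2pow : (g ^ 2) ^ (p + 1) = 1 := by
    rw [← pow_mul', ← hord, pow_mul, pow_orderOf_eq_one, one_pow]
  have hg2 : g ^ 2 = 1 := Units.ext <|
    eq_one_of_pow_eq_one_of_map_eq_one (PadicInt.toZMod (p := p)).mapMatrix (q := p + 1) (by simp)
      (by rw [← Units.val_pow_eq_pow_val, hg2pow, Units.val_one]) (congrArg Units.val hφg2)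
  have := Nat.le_of_dvd two_pos (hord ▸ orderOf_dvd_of_pow_eq_one hg2)
  linarith [(Fact.out : p.Prime).two_le]

/-- For `p` an odd prime, a subgroup of `GL₂(ℤ_p)` contained in the Iwahori
subgroup contains no element of order `p + 1`; equivalently, a subgroup
containing a cyclic subgroup of order `p + 1` is not contained in the Iwahori
subgroup. -/
theorem stmt13 (p : ℕ) [Fact p.Prime] (hodd : Odd p)
    (H : Subgroup (GL (Fin 2) ℤ_[p]))
    (hH : ∀ g ∈ H, ((g : GL (Fin 2) ℤ_[p]) : Matrix (Fin 2) (Fin 2) ℤ_[p]) 1 0 ∈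
      Ideal.span ({(p : ℤ_[p])} : Set ℤ_[p])) :
    ∀ g ∈ H, orderOf g ≠ p + 1 :=
  stmt13_general p H hH
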